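/- For every d = (d₁,d₂,d₃) ∈ ℝ³ with d₁, d₃ ∈ (-π,0) and d₂ ∈ (0,π), the function ℝ³ → ℝ given by x ↦ Re S(x + i·d) (where x + i·d := (x₁+id₁, x₂+id₂, x₃+id₃)) is strictly concave on ℝ³. -/

import Mathlib

open Real

/-- The dilogarithm `Li₂(z) = -∫₀¹ Log(1 - z t)/t dt`. -/
noncomputable def Li2 (z : ℂ) : ℂ :=
  -∫ t in (0:ℝ)..1, Complex.log (1 - z * (t : ℂ)) / (t : ℂ)

/-- The potential function `S`. -/
noncomputable def pot (y₁ y₂ y₃ : ℂ) : ℂ :=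
  Complex.I * (y₁ ^ 2 - y₁ * y₂ + y₂ * y₃ + y₃ ^ 2 / 2) +
    (-(π : ℂ) * y₁ + (π : ℂ) * y₃) +
    Complex.I * Li2 (-Complex.exp y₁) - Complex.I * Li2 (-Complex.exp y₂) +
    3 * Complex.I * Li2 (-Complex.exp y₃)

/-!
Put `g_d(x) = Re(i Li₂(-e^{x+id}))`. Then `Re S(x + id)` is a linear function of `x` plus
`g_{d₁}(x₁) - g_{d₂}(x₂) + 3 g_{d₃}(x₃)`, so it suffices that each coordinate term is strictly
concave. Differentiating under the integral sign gives `d/dx Li₂(-e^{x+id}) = -Log(1 + e^{x+id})`,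
justified by the uniform bound `|1 + s e^{id}| ≥ |sin d|` for real `s`; hence
`g_d'' = e^x sin d / |1 + e^{x+id}|²`, which has the sign of `sin d`. The signs
`sin d₁, sin d₃ < 0 < sin d₂` make every coordinate term strictly concave.
-/

open Set
open Complex (I normSq slitPlane)

theorem strictConcaveOn_sum_apply {ι 𝕜 β : Type*} {E : ι → Type*} [Fintype ι]
    [Field 𝕜] [LinearOrder 𝕜] [IsStrictOrderedRing 𝕜]
    [∀ i, AddCommMonoid (E i)] [∀ i, Module 𝕜 (E i)]
    [AddCommMonoid β] [PartialOrder β] [IsOrderedCancelAddMonoid β] [Module 𝕜 β]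
    {s : ∀ i, Set (E i)} {f : ∀ i, E i → β} (hf : ∀ i, StrictConcaveOn 𝕜 (s i) (f i)) :
    StrictConcaveOn 𝕜 (univ.pi s) (fun x => ∑ i, f i (x i)) := by
  refine ⟨convex_pi fun i _ => (hf i).1, fun x hx y hy hxy a b ha hb hab => ?_⟩
  obtain ⟨j, hj⟩ : ∃ j, x j ≠ y j := Function.ne_iff.1 hxy
  simp only [Finset.smul_sum, ← Finset.sum_add_distrib, Pi.add_apply, Pi.smul_apply]
  refine Finset.sum_lt_sum (fun i _ => (hf i).concaveOn.2 (hx i trivial) (hy i trivial)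
    ha.le hb.le hab) ⟨j, Finset.mem_univ j, (hf j).2 (hx j trivial) (hy j trivial) hj ha hb hab⟩

theorem strictConcaveOn_univ_of_hasDerivAt2_neg {f f' f'' : ℝ → ℝ}
    (hf : ∀ x, HasDerivAt f (f' x) x) (hf' : ∀ x, HasDerivAt f' (f'' x) x)
    (hf'' : ∀ x, f'' x < 0) : StrictConcaveOn ℝ univ f := by
  refine StrictAnti.strictConcaveOn_univ_of_deriv
    (continuous_iff_continuousAt.2 fun x => (hf x).continuousAt) ?_
  rw [show deriv f = f' from funext fun x => (hf x).deriv]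
  exact strictAnti_of_hasDerivAt_neg hf' hf''

theorem hasDerivAt_log_one_add_mul_ofReal {w : ℂ} {t : ℝ} (h : 1 + w * t ∈ slitPlane) :
    HasDerivAt (fun t : ℝ => Complex.log (1 + w * t)) (w / (1 + w * t)) t := by
  have hlin : HasDerivAt (fun u : ℂ => 1 + w * u) w t := by
    simpa using ((hasDerivAt_id (t : ℂ)).const_mul w).const_add 1
  exact (hlin.clog h).comp_ofReal

-- `|sin d|` is the distance from `-1` to the line `ℝ e^{id}`.
theorem abs_sin_le_norm_one_add_exp_mul (d x t : ℝ) :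
    |sin d| ≤ ‖1 + Complex.exp (x + d * I) * t‖ := by
  have hsq : ‖1 + Complex.exp (x + d * I) * t‖ ^ 2 =
      (1 + exp x * cos d * t) ^ 2 + (exp x * sin d * t) ^ 2 := by
    rw [Complex.sq_norm, Complex.normSq_apply]
    simp [Complex.exp_re, Complex.exp_im]
    ring
  rw [← sq_le_sq₀ (abs_nonneg _) (norm_nonneg _), sq_abs, hsq]
  nlinarith [sq_nonneg (exp x * t + cos d), sin_sq_add_cos_sq d]

section Li2NegExp

variable {d : ℝ}

theorem one_add_exp_mul_mem_slitPlane (hd : sin d ≠ 0) (x : ℝ) {t : ℝ} (ht : 0 ≤ t) :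
    1 + Complex.exp (x + d * I) * t ∈ slitPlane := by
  rcases ht.eq_or_lt with rfl | ht
  · simp
  · right
    simpa [Complex.exp_re, Complex.exp_im] using
      mul_ne_zero (mul_ne_zero (exp_pos x).ne' hd) ht.ne'

theorem norm_exp_div_one_add_exp_mul_le (hd : sin d ≠ 0) (x t : ℝ) :
    ‖Complex.exp (x + d * I) / (1 + Complex.exp (x + d * I) * t)‖ ≤ exp x / |sin d| := by
  rw [norm_div, show ‖Complex.exp (x + d * I)‖ = exp x by simp [Complex.norm_exp]]
  gcongr
  exact abs_sin_le_norm_one_add_exp_mul d x t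

theorem hasDerivAt_log_one_add_exp_mul (hd : sin d ≠ 0) (x : ℝ) {t : ℝ} (ht : 0 ≤ t) :
    HasDerivAt (fun x : ℝ => Complex.log (1 + Complex.exp (x + d * I) * t))
      (Complex.exp (x + d * I) * t / (1 + Complex.exp (x + d * I) * t)) x := by
  have hexp : HasDerivAt (fun z : ℂ => 1 + Complex.exp (z + d * I) * t)
      (Complex.exp (x + d * I) * t) x := by
    simpa using (((hasDerivAt_id (x : ℂ)).add_const (d * I)).cexp.mul_const (t : ℂ)).const_add 1
  exact (hexp.clog (one_add_exp_mul_mem_slitPlane hd x ht)).comp_ofReal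

theorem norm_log_one_add_exp_mul_le (hd : sin d ≠ 0) (x : ℝ) {t : ℝ} (ht : 0 ≤ t) :
    ‖Complex.log (1 + Complex.exp (x + d * I) * t)‖ ≤ exp x / |sin d| * t := by
  simpa using norm_image_sub_le_of_norm_deriv_le_segment'
    (fun s hs => (hasDerivAt_log_one_add_mul_ofReal
      (one_add_exp_mul_mem_slitPlane hd x hs.1)).hasDerivWithinAt)
    (fun s hs => norm_exp_div_one_add_exp_mul_le hd x s) t ⟨ht, le_rfl⟩

theorem continuousOn_exp_div_one_add_exp_mul (hd : sin d ≠ 0) (x : ℝ) :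
    ContinuousOn (fun t : ℝ => Complex.exp (x + d * I) / (1 + Complex.exp (x + d * I) * t))
      (Ici 0) := fun t ht =>
  (continuousAt_const.div (g := fun t : ℝ => 1 + Complex.exp (x + d * I) * t) (by fun_prop)
    (Complex.slitPlane_ne_zero (one_add_exp_mul_mem_slitPlane hd x ht))).continuousWithinAt

theorem continuousOn_log_one_add_exp_mul_div (hd : sin d ≠ 0) (x : ℝ) :
    ContinuousOn (fun t : ℝ => Complex.log (1 + Complex.exp (x + d * I) * t) / t) (Ioi 0) :=
  fun _ ht => ((hasDerivAt_log_one_add_mul_ofReal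
    (one_add_exp_mul_mem_slitPlane hd x (le_of_lt ht))).continuousAt.div
    Complex.continuous_ofReal.continuousAt
    (Complex.ofReal_ne_zero.2 (ne_of_gt ht))).continuousWithinAt

theorem intervalIntegrable_log_one_add_exp_mul_div (hd : sin d ≠ 0) (x : ℝ) :
    IntervalIntegrable (fun t : ℝ => Complex.log (1 + Complex.exp (x + d * I) * t) / t)
      MeasureTheory.volume 0 1 := by
  have hIoc : uIoc (0 : ℝ) 1 = Ioc 0 1 := uIoc_of_le zero_le_one
  refine (intervalIntegrable_const (c := exp x / |sin d|)).mono_fun' ?_ ?_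
  · exact ((continuousOn_log_one_add_exp_mul_div hd x).mono (hIoc ▸ Ioc_subset_Ioi_self))
      |>.aestronglyMeasurable measurableSet_uIoc
  · rw [hIoc]
    filter_upwards [MeasureTheory.ae_restrict_mem measurableSet_Ioc] with t ht
    rw [norm_div, Complex.norm_real, norm_of_nonneg ht.1.le, div_le_iff₀ ht.1]
    exact norm_log_one_add_exp_mul_le hd x ht.1.le

theorem hasDerivAt_Li2_neg_exp (hd : sin d ≠ 0) (x₀ : ℝ) :
    HasDerivAt (fun x : ℝ => Li2 (-Complex.exp (x + d * I)))
      (-Complex.log (1 + Complex.exp (x₀ + d * I))) x₀ := by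
  have hIoc : uIoc (0 : ℝ) 1 ⊆ Ioi 0 := by rw [uIoc_of_le zero_le_one]; exact Ioc_subset_Ioi_self
  have hdiff := intervalIntegral.hasDerivAt_integral_of_dominated_loc_of_deriv_le
    (F := fun (x t : ℝ) => Complex.log (1 + Complex.exp (x + d * I) * t) / t)
    (F' := fun (x t : ℝ) => Complex.exp (x + d * I) / (1 + Complex.exp (x + d * I) * t))
    (bound := fun _ => exp (x₀ + 1) / |sin d|) (Iio_mem_nhds (lt_add_one x₀))
    (.of_forall fun x => ((continuousOn_log_one_add_exp_mul_div hd x).mono hIoc)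
      |>.aestronglyMeasurable measurableSet_uIoc)
    (intervalIntegrable_log_one_add_exp_mul_div hd x₀)
    (((continuousOn_exp_div_one_add_exp_mul hd x₀).mono (hIoc.trans Ioi_subset_Ici_self))
      |>.aestronglyMeasurable measurableSet_uIoc)
    (.of_forall fun t _ x hx => (norm_exp_div_one_add_exp_mul_le hd x t).trans (by
      gcongr; exact le_of_lt hx))
    intervalIntegrable_const
    (.of_forall fun t ht x _ => by
      have ht' : 0 < t := hIoc ht
      have ht₀ : (t : ℂ) ≠ 0 := Complex.ofReal_ne_zero.2 ht'.ne'
      refine ((hasDerivAt_log_one_add_exp_mul hd x ht'.le).div_const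
        (t : ℂ)).congr_deriv ?_
      field_simp) |>.2
  have hFTC : ∫ t in (0 : ℝ)..1, Complex.exp (x₀ + d * I) / (1 + Complex.exp (x₀ + d * I) * t)
      = Complex.log (1 + Complex.exp (x₀ + d * I)) := by
    have hIcc : uIcc (0 : ℝ) 1 ⊆ Ici 0 := by rw [uIcc_of_le zero_le_one]; exact Icc_subset_Ici_self
    rw [intervalIntegral.integral_eq_sub_of_hasDerivAt
      (fun t ht => hasDerivAt_log_one_add_mul_ofReal
        (one_add_exp_mul_mem_slitPlane hd x₀ (hIcc ht)))
      ((continuousOn_exp_div_one_add_exp_mul hd x₀).mono hIcc).intervalIntegrable]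
    simp
  rw [hFTC] at hdiff
  simp only [Li2, neg_mul, sub_neg_eq_add]
  exact hdiff.neg

end Li2NegExp

-- The function `g_d` of the proof sketch.
noncomputable def reILi2NegExp (d x : ℝ) : ℝ :=
  (I * Li2 (-Complex.exp (x + d * I))).re

section ReILi2NegExp

variable {d : ℝ}

theorem hasDerivAt_reILi2NegExp (hd : sin d ≠ 0) (x : ℝ) :
    HasDerivAt (reILi2NegExp d) (Complex.log (1 + Complex.exp (x + d * I))).im x :=
  (Complex.reCLM.hasFDerivAt.comp_hasDerivAt x
    ((hasDerivAt_Li2_neg_exp hd x).const_mul I)).congr_deriv (by simp)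

theorem hasDerivAt_im_log_one_add_exp (hd : sin d ≠ 0) (x : ℝ) :
    HasDerivAt (fun x : ℝ => (Complex.log (1 + Complex.exp (x + d * I))).im)
      (exp x * sin d / normSq (1 + Complex.exp (x + d * I))) x := by
  have h := Complex.imCLM.hasFDerivAt.comp_hasDerivAt x
    (hasDerivAt_log_one_add_exp_mul hd x (t := 1) zero_le_one)
  simp only [Complex.ofReal_one, mul_one] at h
  refine h.congr_deriv ?_
  simp [Complex.div_im, Complex.exp_re, Complex.exp_im]
  ring

theorem strictConcaveOn_mul_add_mul_reILi2NegExp (a c : ℝ) (h : c * sin d < 0) :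
    StrictConcaveOn ℝ univ (fun t => a * t + c * reILi2NegExp d t) := by
  have hd : sin d ≠ 0 := fun h0 => by simp [h0] at h
  have hf (t : ℝ) : HasDerivAt (fun t => a * t + c * reILi2NegExp d t)
      (a + c * (Complex.log (1 + Complex.exp (t + d * I))).im) t :=
    (((hasDerivAt_id t).const_mul a).add
      ((hasDerivAt_reILi2NegExp hd t).const_mul c)).congr_deriv (by simp)
  refine strictConcaveOn_univ_of_hasDerivAt2_neg hf
    (fun t => ((hasDerivAt_im_log_one_add_exp hd t).const_mul c).const_add a) fun t => ?_
  have hN : 0 < exp t / normSq (1 + Complex.exp (t + d * I)) :=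
    div_pos (exp_pos t) (Complex.normSq_pos.2
      (by simpa using Complex.slitPlane_ne_zero (one_add_exp_mul_mem_slitPlane hd t zero_le_one)))
  calc c * (exp t * sin d / normSq (1 + Complex.exp (t + d * I)))
      = c * sin d * (exp t / normSq (1 + Complex.exp (t + d * I))) := by ring
    _ < 0 := mul_neg_of_neg_of_pos h hN

end ReILi2NegExp

-- For `y = x + id`, `Re(i yᵀQy) = -2 xᵀQd`; with `Re(yᵀ𝒲) = xᵀ𝒲` this gives the linear part.
theorem re_pot_eq_sum (d₁ d₂ d₃ : ℝ) (x : Fin 3 → ℝ) :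
    (pot (x 0 + d₁ * I) (x 1 + d₂ * I) (x 2 + d₃ * I)).re =
      ∑ i, (![d₂ - 2 * d₁ - π, d₁ - d₃, π - d₂ - d₃] i * x i +
        ![1, -1, 3] i * reILi2NegExp (![d₁, d₂, d₃] i) (x i)) := by
  simp [pot, reILi2NegExp, Fin.sum_univ_three, Complex.mul_re, Complex.mul_im, sq]
  ring

/-- for admissible `d`, the function `x ↦ Re S(x + i d)` is
strictly concave on `ℝ³`. -/
theorem reS_strictConcave (d₁ d₂ d₃ : ℝ)
    (hd₁ : d₁ ∈ Set.Ioo (-π) 0) (hd₂ : d₂ ∈ Set.Ioo 0 π)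
    (hd₃ : d₃ ∈ Set.Ioo (-π) 0) :
    StrictConcaveOn ℝ (Set.univ : Set (Fin 3 → ℝ))
      (fun x : Fin 3 → ℝ =>
        (pot ((x 0 : ℂ) + (d₁ : ℂ) * Complex.I)
             ((x 1 : ℂ) + (d₂ : ℂ) * Complex.I)
             ((x 2 : ℂ) + (d₃ : ℂ) * Complex.I)).re) := by
  have hs₁ : sin d₁ < 0 := sin_neg_of_neg_of_neg_pi_lt hd₁.2 hd₁.1
  have hs₂ : 0 < sin d₂ := sin_pos_of_pos_of_lt_pi hd₂.1 hd₂.2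
  have hs₃ : sin d₃ < 0 := sin_neg_of_neg_of_neg_pi_lt hd₃.2 hd₃.1
  have hsum := strictConcaveOn_sum_apply (s := fun _ => univ)
    (f := fun i t => ![d₂ - 2 * d₁ - π, d₁ - d₃, π - d₂ - d₃] i * t +
      ![1, -1, 3] i * reILi2NegExp (![d₁, d₂, d₃] i) t) fun i => by
    fin_cases i <;> refine strictConcaveOn_mul_add_mul_reILi2NegExp _ _ ?_ <;> simp <;> linarith
  simpa only [pi_univ, re_pot_eq_sum] using hsum
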